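/- arXiv:1402.4981 — 3 statements merged into one kernel-verified Lean document; each statement's English description precedes it below -/
import Mathlib

section
/- Let p be a prime and G a finite group with Sylow p-subgroup S. Assume that O_{p'}(G) = 1 (i.e., the only normal subgroup of G of order coprime to p is the trivial subgroup) and that G is p-constrained (i.e., there exists a normal p-subgroup Q of G with C_G(Q) ≤ Q). Let C := {φ ∈ Aut(G) | φ(s) = s for all s ∈ S} be the group of automorphisms of G restricting to the identity on S. Then C has a normal p-complement: there exists a normal subgroup N of C such that p does not divide the order of N and the quotient C/N is a p-group. -/
/-!
Every `φ` fixing `S` pointwise fixes the normal `p`-subgroup `Q ≤ S` pointwise, so for each `g`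
the element `c = g⁻¹ * φ g` centralizes `Q` and hence lies in `Q`. As `φ` fixes `c`, `φ ^ m`
maps `g` to `g * c ^ m`, so `φ ^ |Q| = 1` and the group of such automorphisms is a `p`-group,
in which the trivial subgroup is a normal `p`-complement.
-/

/-- The subgroup of automorphisms of `G` fixing every element of the set `s` pointwise. -/
def fixingAut (G : Type*) [Group G] (s : Set G) : Subgroup (MulAut G) where
  carrier := {φ | ∀ x ∈ s, φ x = x}
  one_mem' := fun x _ => rfl
  mul_mem' := by
    intro a b ha hb x hx
    have : (a * b) x = a (b x) := rfl
    rw [this, hb x hx, ha x hx]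
  inv_mem' := by
    intro a ha x hx
    conv_lhs => rw [← ha x hx]
    exact MulAut.inv_apply_self _ a x

/-- A group `G` (with `O_{p'}(G) = 1`) is `p`-constrained if it has a normal
`G`-centric `p`-subgroup. -/
def PConstrained (p : ℕ) (G : Type*) [Group G] : Prop :=
  ∃ Q : Subgroup G, Q.Normal ∧ IsPGroup p Q ∧ Subgroup.centralizer (Q : Set G) ≤ Q

/-- A group `C` has a normal `p`-complement if there is a normal subgroup `N` of `C` of order
not divisible by `p` such that `C ⧸ N` is a `p`-group. -/
def HasNormalPComplement (p : ℕ) (C : Type*) [Group C] : Prop :=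
  ∃ (N : Subgroup C) (hN : N.Normal), ¬ (p ∣ Nat.card N) ∧
    @IsPGroup p (C ⧸ N) (@QuotientGroup.Quotient.group C _ N hN)

theorem fixingAut_anti {G : Type*} [Group G] {s t : Set G} (hst : s ⊆ t) :
    fixingAut G t ≤ fixingAut G s :=
  fun _ hφ x hx => hφ x (hst hx)

theorem IsPGroup.hasNormalPComplement {p : ℕ} (hp : p ≠ 1) {C : Type*} [Group C]
    (hC : IsPGroup p C) : HasNormalPComplement p C :=
  ⟨⊥, inferInstance, by simpa using hp, hC.to_quotient ⊥⟩

namespace MulAut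

variable {G : Type*} [Group G]

theorem pow_apply_of_apply_eq_mul {φ : MulAut G} {g c : G} (hc : φ c = c) (hg : φ g = g * c)
    (m : ℕ) : (φ ^ m) g = g * c ^ m := by
  induction m with
  | zero => simp
  | succ m ih =>
    rw [pow_succ', mul_apply, ih, map_mul, map_pow, hg, hc, mul_assoc, ← pow_succ']

theorem inv_mul_apply_mem_centralizer {Q : Subgroup G} [Q.Normal] {φ : MulAut G}
    (hφ : φ ∈ fixingAut G Q) (g : G) : g⁻¹ * φ g ∈ Subgroup.centralizer (Q : Set G) := by
  rw [Subgroup.mem_centralizer_iff]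
  intro q hq
  have hconj : φ g * q * (φ g)⁻¹ = g * q * g⁻¹ := by
    simpa only [map_mul, map_inv, hφ q hq] using hφ _ (Subgroup.Normal.conj_mem ‹_› q hq g)
  calc q * (g⁻¹ * φ g) = g⁻¹ * (g * q * g⁻¹) * φ g := by group
    _ = g⁻¹ * (φ g * q * (φ g)⁻¹) * φ g := by rw [hconj]
    _ = g⁻¹ * φ g * q := by group

theorem pow_card_eq_one_of_mem_fixingAut {Q : Subgroup G} [Q.Normal]
    (hQ : Subgroup.centralizer (Q : Set G) ≤ Q) {φ : MulAut G} (hφ : φ ∈ fixingAut G Q) :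
    φ ^ Nat.card Q = 1 := by
  ext g
  have hc : g⁻¹ * φ g ∈ Q := hQ (inv_mul_apply_mem_centralizer hφ g)
  have hcard : (g⁻¹ * φ g) ^ Nat.card Q = 1 :=
    Subtype.ext_iff.mp (pow_card_eq_one' (x := (⟨_, hc⟩ : Q)))
  rw [pow_apply_of_apply_eq_mul (hφ _ hc) (by group), hcard, mul_one, one_apply]

end MulAut

theorem isPGroup_fixingAut {p : ℕ} [Fact p.Prime] {G : Type*} [Group G] {Q : Subgroup G}
    [Q.Normal] [Finite Q] (hQp : IsPGroup p Q) (hQ : Subgroup.centralizer (Q : Set G) ≤ Q) :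
    IsPGroup p (fixingAut G Q) := by
  obtain ⟨n, hn⟩ := hQp.exists_card_eq
  intro φ
  exact ⟨n, Subtype.ext <| hn ▸ MulAut.pow_card_eq_one_of_mem_fixingAut hQ φ.2⟩

theorem gross_normal_p_complement_general (p : ℕ) [Fact p.Prime] (G : Type*) [Group G] [Finite G]
    (S : Sylow p G)
    (hconstr : PConstrained p G) :
    HasNormalPComplement p (fixingAut G ((S : Subgroup G) : Set G)) := by
  obtain ⟨Q, hQnorm, hQp, hQcent⟩ := hconstr
  have hQS : Q ≤ S := hQp.le_sylow_of_normal S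
  exact ((isPGroup_fixingAut hQp hQcent).to_le (fixingAut_anti hQS)).hasNormalPComplement
    (Fact.out : p.Prime).ne_one

/-- Gross: if `G` is `p`-constrained with `O_{p'}(G) = 1` and `S` is a Sylow `p`-subgroup of
`G`, then the group of automorphisms of `G` restricting to the identity on `S` has a normal
`p`-complement. -/
theorem gross_normal_p_complement (p : ℕ) [Fact p.Prime] (G : Type*) [Group G] [Finite G]
    (S : Sylow p G)
    (hOp' : ∀ N : Subgroup G, N.Normal → (Nat.card N).Coprime p → N = ⊥)
    (hconstr : PConstrained p G) :
    HasNormalPComplement p (fixingAut G ((S : Subgroup G) : Set G)) :=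
  gross_normal_p_complement_general p G S hconstr
end

section
/- Let p be a prime, G a finite group, H a normal subgroup of G, S a Sylow p-subgroup of G, and T := S ∩ H (which is then a Sylow p-subgroup of H). Assume O_{p'}(G) = 1 (every normal subgroup of G of order coprime to p is trivial), and assume both G and H are p-constrained (each contains a normal p-subgroup that is centric in it). Then O^p(C_G(T)) ∩ S ≤ C_G(H), where O^p(K) denotes the smallest normal subgroup of K whose quotient is a p-group, i.e., the intersection of all normal subgroups N of K with K/N a p-group. -/
/-- `O^p(K)`: the smallest normal subgroup of `K` with `p`-group quotient, i.e. the
intersection of all normal subgroups `N ⊴ K` such that `K ⧸ N` is a `p`-group. -/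
def pResidual (p : ℕ) (K : Type*) [Group K] : Subgroup K :=
  ⨅ (N : Subgroup K) (hN : N.Normal) (_ : @IsPGroup p (K ⧸ N) (@QuotientGroup.Quotient.group K _ N hN)), N

/-!
Let `Q ⊴ H` be a `p`-subgroup with `C_H(Q) ≤ Q`. Being a normal `p`-subgroup of `H`, it lies in the
Sylow subgroup `T = S ∩ H` of `H`, so every `p'`-element `c` of `C_G(T)` centralizes `Q`. For
`h ∈ H` the commutator `k = [h, c]` then centralizes `Q`, hence lies in `Q` and commutes with `c`;
so `h c^n h⁻¹ = (k c)^n = k^n c^n` for `n` the order of `c`, whence `k^n = 1` and `k = 1` as `n` is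
prime to `p`. Thus all `p'`-elements of `C_G(T)` centralize `H`, the quotient of `C_G(T)` by
`C_G(T) ∩ C_G(H)` is a `p`-group, and `O^p(C_G(T)) ≤ C_G(H)`.
-/

open Subgroup
open scoped commutatorElement

section

variable {p : ℕ} {G : Type*} [Group G]

theorem Subgroup.relIndex_dvd_index_of_normal_right [Finite G] (K H : Subgroup G) [H.Normal] :
    K.relIndex H ∣ K.index := by
  have hinf : K.relIndex H * H.index = H.relIndex K * K.index := by
    rw [← inf_relIndex_right K H, relIndex_mul_index inf_le_right, ← inf_relIndex_right H K,
      relIndex_mul_index inf_le_right, inf_comm]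
  obtain ⟨m, hm⟩ := relIndex_dvd_index_of_normal H K
  have hpos : 0 < H.relIndex K := Nat.pos_of_ne_zero (H.subgroupOf K).index_ne_zero_of_finite
  refine ⟨m, Nat.eq_of_mul_eq_mul_left hpos ?_⟩
  rw [← hinf, hm]
  ring

theorem commutatorElement_pow_orderOf_eq_one {h c : G} (hk : Commute ⁅h, c⁆ c) :
    ⁅h, c⁆ ^ orderOf c = 1 :=
  calc ⁅h, c⁆ ^ orderOf c = (⁅h, c⁆ * c) ^ orderOf c := by
        rw [hk.mul_pow, pow_orderOf_eq_one, mul_one]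
    _ = h * c ^ orderOf c * h⁻¹ := by rw [commutatorElement_def, inv_mul_cancel_right, conj_pow]
    _ = 1 := by rw [pow_orderOf_eq_one, mul_one, mul_inv_cancel]

theorem IsPGroup.eq_one_of_pow_eq_one {Q : Subgroup G} (hQ : IsPGroup p Q) {x : G} (hx : x ∈ Q)
    {n : ℕ} (hn : p.Coprime n) (hxn : x ^ n = 1) : x = 1 := by
  have h : hQ.powEquiv hn ⟨x, hx⟩ = hQ.powEquiv hn 1 := by
    simpa [IsPGroup.powEquiv_apply, Subtype.ext_iff] using hxn
  simpa [Subtype.ext_iff] using (hQ.powEquiv hn).injective h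

def Sylow.subgroupOf [Fact p.Prime] [Finite G] (S : Sylow p G) (H : Subgroup G) [H.Normal] :
    Sylow p H :=
  (S.2.comap_subtype (K := H)).toSylow fun hdvd ↦
    S.not_dvd_index (hdvd.trans ((S : Subgroup G).relIndex_dvd_index_of_normal_right H))

theorem exists_orderOf_pow_prime_pow_coprime [Fact p.Prime] [Finite G] (g : G) :
    ∃ a : ℕ, (orderOf (g ^ p ^ a)).Coprime p := by
  have hp : p.Prime := Fact.out
  refine ⟨(orderOf g).factorization p, ?_⟩
  rw [orderOf_pow_of_dvd (pow_ne_zero _ hp.ne_zero) (Nat.ordProj_dvd _ _), Nat.coprime_comm,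
    hp.coprime_iff_not_dvd]
  exact Nat.not_dvd_ordCompl hp (orderOf_pos g).ne'

theorem isPGroup_quotient_of_forall_coprime_mem [Fact p.Prime] [Finite G] {N : Subgroup G}
    [N.Normal] (hN : ∀ g : G, (orderOf g).Coprime p → g ∈ N) : IsPGroup p (G ⧸ N) := by
  intro x
  induction x using QuotientGroup.induction_on with
  | H g =>
    obtain ⟨a, ha⟩ := exists_orderOf_pow_prime_pow_coprime (p := p) g
    exact ⟨a, by rw [← QuotientGroup.mk_pow, QuotientGroup.eq_one_iff]; exact hN _ ha⟩

theorem pResidual_le {N : Subgroup G} [hN : N.Normal] (hp : IsPGroup p (G ⧸ N)) :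
    pResidual p G ≤ N :=
  iInf_le_of_le N <| iInf_le_of_le hN <| iInf_le _ hp

theorem mem_centralizer_of_coprime_of_commute_centric {H : Subgroup G} [hH : H.Normal]
    {Q : Subgroup H} [hQn : Q.Normal] (hQ : IsPGroup p Q)
    (hQc : centralizer (Q : Set H) ≤ Q) {c : G} (hc : ∀ q ∈ Q, Commute c (q : G))
    (hcp : (orderOf c).Coprime p) : c ∈ centralizer (H : Set G) := by
  rw [mem_centralizer_iff]
  intro h hh
  have hkH : ⁅h, c⁆ ∈ H := by
    rw [commutatorElement_def, mul_assoc (h * c), mul_assoc h, ← mul_assoc c]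
    exact mul_mem hh (hH.conj_mem _ (inv_mem hh) c)
  -- `⁅h, c⁆ = (h c h⁻¹) c⁻¹` is a product of two elements centralizing `Q`, hence lies in `Q`.
  have hkQ : (⟨⁅h, c⁆, hkH⟩ : H) ∈ Q := by
    refine hQc (mem_centralizer_iff.mpr fun q hq ↦ Subtype.ext ?_)
    have hconj : Commute (h * c * h⁻¹) q := by
      simpa [mul_assoc] using (Commute.conj_iff h).mpr
        (hc _ (hQn.conj_mem q hq ⟨h, hh⟩⁻¹))
    exact (hconj.mul_left (hc q hq).inv_left).symm.eq
  have hkc : Commute ⁅h, c⁆ c := (hc _ hkQ).symm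
  have hk : ⁅h, c⁆ = 1 :=
    (hQ.map H.subtype).eq_one_of_pow_eq_one ⟨_, hkQ, rfl⟩ hcp.symm
      (commutatorElement_pow_orderOf_eq_one hkc)
  exact commutatorElement_eq_one_iff_mul_comm.mp hk

end

theorem pResidual_centralizer_le_general (p : ℕ) [Fact p.Prime] (G : Type*) [Group G] [Finite G]
    (H : Subgroup G) [H.Normal] (S : Sylow p G)
    (T : Subgroup G) (hT : T = (S : Subgroup G) ⊓ H)
    (hH : PConstrained p H) :
    Subgroup.map (Subgroup.centralizer (T : Set G)).subtype
        (pResidual p (Subgroup.centralizer (T : Set G))) ⊓ (S : Subgroup G)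
      ≤ Subgroup.centralizer (H : Set G) := by
  obtain ⟨Q, hQn, hQp, hQc⟩ := hH
  have hQT : ∀ q ∈ Q, (q : G) ∈ T := fun q hq ↦
    hT ▸ ⟨hQp.le_sylow_of_normal (S.subgroupOf H) hq, q.2⟩
  have hres : pResidual p (centralizer (T : Set G)) ≤
      (centralizer (H : Set G)).subgroupOf (centralizer (T : Set G)) := by
    refine pResidual_le (isPGroup_quotient_of_forall_coprime_mem fun c hc ↦ ?_)
    refine mem_centralizer_of_coprime_of_commute_centric hQp hQc (fun q hq ↦ ?_) ?_
    · exact (mem_centralizer_iff.mp c.2 _ (hQT q hq)).symm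
    · rwa [coe_subtype, orderOf_coe]
  rintro _ ⟨⟨c, hc, rfl⟩, -⟩
  exact hres hc

/-- If `(G, H)` is a normal pair of `p`-constrained finite groups with Sylow pair `(S, T)`
and `O_{p'}(G) = 1`, then `O^p(C_G(T)) ∩ S ≤ C_G(H)`. -/
theorem pResidual_centralizer_le (p : ℕ) [Fact p.Prime] (G : Type*) [Group G] [Finite G]
    (H : Subgroup G) [H.Normal] (S : Sylow p G)
    (T : Subgroup G) (hT : T = (S : Subgroup G) ⊓ H)
    (hOp' : ∀ N : Subgroup G, N.Normal → (Nat.card N).Coprime p → N = ⊥)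
    (hG : PConstrained p G) (hH : PConstrained p H) :
    Subgroup.map (Subgroup.centralizer (T : Set G)).subtype
        (pResidual p (Subgroup.centralizer (T : Set G))) ⊓ (S : Subgroup G)
      ≤ Subgroup.centralizer (H : Set G) :=
  pResidual_centralizer_le_general p G H S T hT hH
end

section
/- Let n ≥ 6, let G be the symmetric group on n letters, H the alternating group on n letters (a normal subgroup of G), p = 2, S a Sylow 2-subgroup of G, and T := S ∩ H. Define C_S(E) := {g ∈ S | g centralizes T, and for every subgroup P ≤ T and every h ∈ H with hPh⁻¹ ≤ T there exists x ∈ C_G(g) such that xpx⁻¹ = hph⁻¹ for all p ∈ P}. Then C_S(E) = C_G(H) ∩ S; in particular, since the centralizer of the alternating group in the symmetric group is trivial for n ≥ 4, C_S(E) is the trivial subgroup. -/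
/-- The centralizer `C_S(E)` in `S` of the fusion system `E = F_{S ⊓ H}(H)`. -/
def fusionCent {G : Type*} [Group G] (S H : Subgroup G) : Set G :=
  {g | g ∈ S ∧ g ∈ Subgroup.centralizer ((S ⊓ H : Subgroup G) : Set G) ∧
    ∀ P : Subgroup G, P ≤ S ⊓ H → ∀ h ∈ H, (∀ x ∈ P, h * x * h⁻¹ ∈ S ⊓ H) →
      ∃ c ∈ Subgroup.centralizer ({g} : Set G), ∀ q ∈ P, c * q * c⁻¹ = h * q * h⁻¹}

/-!
Let `g ∈ C_S(E)` and `T = S ⊓ H`. Since `g` centralizes `T`, the subgroup `T` is a Sylow subgroup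
of `C_H(g)`, so every `H`-fusion between `p`-elements `d, d'` of `C_H(g)` is realized by an element
of `C_G(g)`; in particular `d * g` and `d' * g` are conjugate and their supports have equal size.

For `G = S_n`, `H = A_n`, the support of the `2`-element `g ≠ 1` has even size `m`. If `m = 2`,
`g = (x y)` and the `A_n`-conjugate elements `(u v)(x y)` and `(u v)(u' v')` give products with
`g` whose supports have sizes `2` and `6`. If `m ≥ 4`, conjugating a Klein four group on four
points of `supp g` into `T` inside the stabilizer of `supp g` in `A_n` yields double transpositions
`t, t' ∈ T` on a set `B ⊆ supp g` with `g = t` on `B`; then `t * g` fixes `B` while `t' * g` does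
not, so `t * g` has strictly smaller support than `t' * g`.
The first equality then follows from `C_G(H) ∩ S ⊆ C_S(E)`, which holds for any `S` and `H`.
-/

open Equiv Equiv.Perm Subgroup Finset
open scoped Pointwise

namespace Subgroup

variable {G : Type*} [Group G]

theorem relIndex_dvd_index_of_normal' [Finite G] (H K : Subgroup G) [K.Normal] :
    H.relIndex K ∣ H.index := by
  have hHK := relIndex_inf_mul_relIndex H K ⊤
  have hKH := relIndex_inf_mul_relIndex K H ⊤
  simp only [inf_top_eq, relIndex_top_right, inf_comm K H] at hHK hKH
  obtain ⟨c, hc⟩ := relIndex_dvd_index_of_normal K H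
  refine ⟨c, Nat.eq_of_mul_eq_mul_left
    (Nat.pos_of_ne_zero (K.subgroupOf H).index_ne_zero_of_finite) ?_⟩
  change K.relIndex H * H.index = K.relIndex H * (H.relIndex K * c)
  rw [hKH, ← hHK, hc]
  ring

end Subgroup

theorem IsPGroup.zpowers_of_pow_eq_one {G : Type*} [Group G] {p k : ℕ} {g : G}
    (hg : g ^ p ^ k = 1) : IsPGroup p (zpowers g) := by
  rintro ⟨_, j, rfl⟩
  refine ⟨k, Subtype.ext ?_⟩
  simp only [SubgroupClass.coe_pow, OneMemClass.coe_one]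
  rw [← zpow_natCast, ← zpow_mul, mul_comm, zpow_mul, zpow_natCast, hg, one_zpow]

theorem IsPGroup.zpowers_sup_zpowers {G : Type*} [Group G] {p : ℕ} {x y : G} (hxy : Commute x y)
    (hx : IsPGroup p (zpowers x)) (hy : IsPGroup p (zpowers y)) :
    IsPGroup p ↥(zpowers x ⊔ zpowers y) :=
  hx.to_sup_of_normal_right' hy <| zpowers_le.mpr <| centralizer_le_normalizer _ <|
    mem_centralizer_iff.mpr (by rintro _ ⟨k, rfl⟩; exact (hxy.symm.zpow_left k).eq)

section FusionCentralizer

variable {G : Type*} [Group G] {S H : Subgroup G} {g : G}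

theorem centralizer_inf_subset_fusionCent :
    ((centralizer (H : Set G) ⊓ S : Subgroup G) : Set G) ⊆ fusionCent S H := by
  rintro g ⟨hgH, hgS⟩
  refine ⟨hgS, centralizer_le (fun t ht ↦ ht.2) hgH, fun P _ h hh _ ↦ ⟨h, ?_, fun _ _ ↦ rfl⟩⟩
  exact mem_centralizer_singleton_iff.mpr (hgH h hh)

theorem commute_of_mem_fusionCent (hg : g ∈ fusionCent S H) {t : G} (ht : t ∈ S ⊓ H) :
    Commute t g :=
  hg.2.1 t ht

theorem exists_commute_conj_of_mem_fusionCent (hg : g ∈ fusionCent S H) {t t' h : G}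
    (ht : t ∈ S ⊓ H) (ht' : t' ∈ S ⊓ H) (hh : h ∈ H) (hconj : h * t * h⁻¹ = t') :
    ∃ c, Commute c g ∧ c * t * c⁻¹ = t' := by
  obtain ⟨c, hc, hct⟩ := hg.2.2 (zpowers t) (zpowers_le.mpr ht) h hh (by
    rintro _ ⟨k, rfl⟩
    simpa only [← conj_zpow, hconj] using zpow_mem ht' k)
  exact ⟨c, mem_centralizer_singleton_iff.mp hc, by rw [hct t (mem_zpowers t), hconj]⟩

end FusionCentralizer

namespace Sylow

variable {G : Type*} [Group G] [Finite G] {p : ℕ} [Fact p.Prime] (S : Sylow p G)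
  {H : Subgroup G} [H.Normal]

theorem exists_conj_mem_inf_of_isPGroup {K Q : Subgroup G} (hTK : (S : Subgroup G) ⊓ H ≤ K)
    (hKH : K ≤ H) (hQK : Q ≤ K) (hQ : IsPGroup p Q) :
    ∃ κ ∈ K, ∀ q ∈ Q, κ * q * κ⁻¹ ∈ (S : Subgroup G) ⊓ H := by
  have hT : IsPGroup p (((S : Subgroup G) ⊓ H).subgroupOf K) :=
    (S.isPGroup'.to_le inf_le_left).comap_subtype
  have hindex : ¬ p ∣ (((S : Subgroup G) ⊓ H).subgroupOf K).index := fun hp ↦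
    S.not_dvd_index <| hp.trans <|
      calc (((S : Subgroup G) ⊓ H).subgroupOf K).index
          = ((S : Subgroup G) ⊓ H).relIndex K := rfl
        _ ∣ ((S : Subgroup G) ⊓ H).relIndex H := Dvd.intro _ (relIndex_mul_relIndex _ _ _ hTK hKH)
        _ = (S : Subgroup G).relIndex H := inf_relIndex_right _ _
        _ ∣ (S : Subgroup G).index := relIndex_dvd_index_of_normal' _ _
  obtain ⟨P, hQP⟩ := (hQ.comap_subtype (K := K)).exists_le_sylow
  obtain ⟨κ, hκ⟩ := MulAction.exists_smul_eq K P (hT.toSylow hindex)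
  refine ⟨κ, κ.2, fun q hq ↦ ?_⟩
  have : κ * ⟨q, hQK hq⟩ * κ⁻¹ ∈ (hT.toSylow hindex : Subgroup K) := by
    rw [← hκ, Sylow.coe_subgroup_smul]
    exact smul_mem_pointwise_smul _ _ _ (hQP hq)
  simpa using mem_subgroupOf.mp this

theorem isConj_mul_of_mem_fusionCent {g : G} (hg : g ∈ fusionCent S H) {d d' h : G}
    (hd : d ∈ H) (hh : h ∈ H) (hconj : h * d * h⁻¹ = d') (hdg : Commute d g)
    (hd'g : Commute d' g) (hdp : IsPGroup p (zpowers d)) (hd'p : IsPGroup p (zpowers d')) :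
    IsConj (d * g) (d' * g) := by
  have hd' : d' ∈ H := hconj ▸ mul_mem (mul_mem hh hd) (inv_mem hh)
  have hTK : (S : Subgroup G) ⊓ H ≤ H ⊓ centralizer {g} := fun t ht ↦
    ⟨ht.2, mem_centralizer_singleton_iff.mpr (commute_of_mem_fusionCent hg ht)⟩
  have hle {x : G} (hx : x ∈ H) (hxg : Commute x g) : zpowers x ≤ H ⊓ centralizer {g} :=
    zpowers_le.mpr ⟨hx, mem_centralizer_singleton_iff.mpr hxg⟩
  obtain ⟨κ, hκ, hκd⟩ := S.exists_conj_mem_inf_of_isPGroup hTK inf_le_left (hle hd hdg) hdp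
  obtain ⟨κ', hκ', hκd'⟩ := S.exists_conj_mem_inf_of_isPGroup hTK inf_le_left (hle hd' hd'g) hd'p
  obtain ⟨c, hcg, hc⟩ := exists_commute_conj_of_mem_fusionCent hg (hκd d (mem_zpowers d))
    (hκd' d' (mem_zpowers d')) (h := κ' * h * κ⁻¹) (mul_mem (mul_mem hκ'.1 hh) (inv_mem hκ.1))
    (by rw [← hconj]; group)
  have hκg : Commute κ g := mem_centralizer_singleton_iff.mp hκ.2
  have hκ'g : Commute κ' g := mem_centralizer_singleton_iff.mp hκ'.2
  have hxg : Commute (κ'⁻¹ * c * κ) g := (hκ'g.inv_left.mul_left hcg).mul_left hκg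
  have hxd : κ'⁻¹ * c * κ * d * (κ'⁻¹ * c * κ)⁻¹ = d' := by
    calc _ = κ'⁻¹ * (c * (κ * d * κ⁻¹) * c⁻¹) * κ' := by group
      _ = d' := by rw [hc]; group
  refine isConj_iff.mpr ⟨κ'⁻¹ * c * κ, ?_⟩
  calc _ = κ'⁻¹ * c * κ * d * (κ'⁻¹ * c * κ)⁻¹ * (κ'⁻¹ * c * κ * g * (κ'⁻¹ * c * κ)⁻¹) := by
        group
    _ = d' * g := by rw [hxd, hxg.eq, mul_inv_cancel_right]

end Sylow

theorem Finset.exists_nodup_four_of_four_le_card {α : Type*} {s : Finset α} (h : 4 ≤ #s) :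
    ∃ a b c d, [a, b, c, d].Nodup ∧ a ∈ s ∧ b ∈ s ∧ c ∈ s ∧ d ∈ s := by
  obtain ⟨f⟩ := Function.Embedding.nonempty_of_card_le (α := Fin 4) (β := s) (by simpa using h)
  refine ⟨f 0, f 1, f 2, f 3, ?_, (f 0).2, (f 1).2, (f 2).2, (f 3).2⟩
  simp [f.injective.eq_iff]

namespace Equiv.Perm

variable {α : Type*} [DecidableEq α]

theorem conj_swap_mul_swap (σ : Perm α) (a b c d : α) :
    σ * (swap a b * swap c d) * σ⁻¹ = swap (σ a) (σ b) * swap (σ c) (σ d) := by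
  rw [swap_apply_apply, swap_apply_apply]
  group

theorem swap_mul_swap_mul_swap_mul_swap {a b c d : α} (h : [a, b, c, d].Nodup) :
    swap a b * swap c d * (swap a c * swap b d) = swap a d * swap b c := by
  simp only [List.nodup_cons, List.mem_cons] at h
  ext x
  simp only [Perm.mul_apply, swap_apply_def]
  split_ifs <;> grind

theorem commute_swap_mul_swap {a b c d : α} (h : [a, b, c, d].Nodup) :
    Commute (swap a b * swap c d) (swap a c * swap b d) := by
  have h' : [a, c, b, d].Nodup := by simp at h ⊢; grind
  rw [Commute, SemiconjBy, swap_mul_swap_mul_swap_mul_swap h, swap_mul_swap_mul_swap_mul_swap h',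
    swap_comm c b]

theorem swap_mul_swap_pow_two {a b c d : α} (h : [a, b, c, d].Nodup) :
    (swap a b * swap c d) ^ 2 = 1 := by
  rw [(disjoint_swap_swap h).commute.mul_pow, sq, sq, swap_mul_self, swap_mul_self, one_mul]

theorem isPGroup_zpowers_swap_mul_swap {a b c d : α} (h : [a, b, c, d].Nodup) :
    IsPGroup 2 (zpowers (swap a b * swap c d)) :=
  IsPGroup.zpowers_of_pow_eq_one (k := 1) (swap_mul_swap_pow_two h)

variable [Fintype α]

theorem swap_mul_swap_mem_alternatingGroup {a b c d : α} (hab : a ≠ b) (hcd : c ≠ d) :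
    swap a b * swap c d ∈ alternatingGroup α :=
  mul_mem_alternatingGroup_of_isSwap ⟨a, b, hab, rfl⟩ ⟨c, d, hcd, rfl⟩

theorem card_support_lt_card_support_mul {f k : Perm α} (h : Disjoint k f) (hk : k ≠ 1) :
    #f.support < #(k * f).support := by
  have := one_lt_card_support_of_ne_one hk
  rw [h.card_support_mul]
  omega

theorem dvd_card_support_of_pow_eq_one {p k : ℕ} [Fact p.Prime] {σ : Perm α}
    (hσ : σ ^ p ^ k = 1) : p ∣ #σ.support := by
  have := (Nat.modEq_iff_dvd' (card_le_univ _)).mp (card_compl_support_modEq hσ)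
  rwa [card_compl, Nat.sub_sub_self (card_le_univ _)] at this

end Equiv.Perm

section SymmetricGroup

variable {α : Type*} [DecidableEq α] [Fintype α] {S : Sylow 2 (Perm α)} {g : Perm α}

theorem card_support_ne_two_of_mem_fusionCent (hα : 6 ≤ Fintype.card α)
    (hg : g ∈ fusionCent S (alternatingGroup α)) : #g.support ≠ 2 := by
  intro h2
  obtain ⟨x, y, hxy, rfl⟩ := card_support_eq_two.mp h2
  obtain ⟨u, v, u', v', hnd, hu, hv, hu', hv'⟩ :=
    exists_nodup_four_of_four_le_card (s := (swap x y).supportᶜ) (by rw [card_compl]; omega)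
  simp only [mem_compl, support_swap hxy, mem_insert, mem_singleton, not_or] at hu hv hu' hv'
  simp only [List.nodup_cons, List.mem_cons, List.not_mem_nil] at hnd
  have h₁₂ : Disjoint (swap u v) (swap u' v') := disjoint_swap_swap (by simp; grind)
  have h₁₃ : Disjoint (swap u v) (swap x y) := disjoint_swap_swap (by simp; grind)
  have h₂₃ : Disjoint (swap u' v') (swap x y) := disjoint_swap_swap (by simp; grind)
  have hconj := S.isConj_mul_of_mem_fusionCent hg (d := swap u v * swap x y)
    (d' := swap u v * swap u' v') (h := swap x u' * swap y v')
    (swap_mul_swap_mem_alternatingGroup (by grind) hxy)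
    (swap_mul_swap_mem_alternatingGroup (by grind) (by grind))
    (by rw [conj_swap_mul_swap]; congr 2 <;> simp [*] <;> grind)
    (h₁₃.commute.mul_left (Commute.refl _)) (h₁₃.mul_left h₂₃).commute
    (isPGroup_zpowers_swap_mul_swap (by simp; grind))
    (isPGroup_zpowers_swap_mul_swap (by simp; grind))
  obtain ⟨c, hc⟩ := isConj_iff.mp hconj
  have hcard := card_support_conj (σ := c) (τ := swap u v * swap x y * swap x y)
  rw [hc, mul_assoc (swap u v) (swap x y), swap_mul_self, mul_one,
    (h₁₃.mul_left h₂₃).card_support_mul, h₁₂.card_support_mul] at hcard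
  omega

/-- `g` agrees with `t₁ = (a b)(c d)` on `{a, b, c, d}`, so `t₁ * g` fixes these points and
`t₂ * g = (t₂ * t₁) * (t₁ * g)` has strictly larger support, although `t₁` and `t₂` are conjugate
under the `3`-cycle `(b c d)`. -/
theorem notMem_fusionCent_of_apply_eq {a b c d : α} (hnd : [a, b, c, d].Nodup)
    (h₁ : swap a b * swap c d ∈ (S : Subgroup (Perm α)) ⊓ alternatingGroup α)
    (h₂ : swap a c * swap b d ∈ (S : Subgroup (Perm α)) ⊓ alternatingGroup α)
    (hga : g a = b) : g ∉ fusionCent S (alternatingGroup α) := by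
  intro hg
  have hc₁ := commute_of_mem_fusionCent hg h₁
  have hc₂ := commute_of_mem_fusionCent hg h₂
  have hne := hnd
  simp only [List.nodup_cons, List.mem_cons, List.not_mem_nil] at hne
  have hgB : g b = a ∧ g c = d ∧ g d = c := by
    have e₁ := fun x ↦ DFunLike.congr_fun hc₁.eq x
    have e₂ := fun x ↦ DFunLike.congr_fun hc₂.eq x
    simp only [Perm.mul_apply, swap_apply_def] at e₁ e₂
    grind
  have hdisj : Disjoint (swap a c * swap b d * (swap a b * swap c d))
      (swap a b * swap c d * g) := by
    intro x
    simp only [Perm.mul_apply, swap_apply_def]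
    grind
  have hlt := card_support_lt_card_support_mul hdisj (fun h ↦ by
    have := DFunLike.congr_fun h a
    simp only [Perm.mul_apply, swap_apply_def, Perm.one_apply] at this
    grind)
  have ht₁ : swap a b * swap c d * (swap a b * swap c d) = 1 := by
    rw [← sq, swap_mul_swap_pow_two hnd]
  rw [← mul_assoc _ (swap a b * swap c d) g, mul_assoc (swap a c * swap b d), ht₁, mul_one] at hlt
  have hconj := S.isConj_mul_of_mem_fusionCent hg (h := swap b c * swap c d) h₁.2
    (swap_mul_swap_mem_alternatingGroup (by grind) (by grind))
    (by rw [conj_swap_mul_swap, swap_comm b d]; congr 2 <;> simp [*] <;> grind) hc₁ hc₂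
    (isPGroup_zpowers_swap_mul_swap hnd) (isPGroup_zpowers_swap_mul_swap (by simp; grind))
  obtain ⟨x, hx⟩ := isConj_iff.mp hconj
  rw [← hx, card_support_conj] at hlt
  exact lt_irrefl _ hlt

theorem exists_swap_mul_swap_mem_of_four_le_card_support
    (hgT : ∀ t ∈ (S : Subgroup (Perm α)) ⊓ alternatingGroup α, Commute t g)
    (h4 : 4 ≤ #g.support) :
    ∃ a b c d, [a, b, c, d].Nodup ∧ a ∈ g.support ∧
      swap a b * swap c d ∈ (S : Subgroup (Perm α)) ⊓ alternatingGroup α ∧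
      swap a c * swap b d ∈ (S : Subgroup (Perm α)) ⊓ alternatingGroup α ∧
      swap a d * swap b c ∈ (S : Subgroup (Perm α)) ⊓ alternatingGroup α := by
  obtain ⟨a, b, c, d, hnd, ha, hb, hc, hd⟩ := exists_nodup_four_of_four_le_card h4
  have hne := hnd
  simp only [List.nodup_cons, List.mem_cons, List.not_mem_nil] at hne
  have hnd₂ : [a, c, b, d].Nodup := by simp; grind
  set K := alternatingGroup α ⊓ MulAction.stabilizer (Perm α) (g.support : Set α)
  have hTK : (S : Subgroup (Perm α)) ⊓ alternatingGroup α ≤ K := fun t ht ↦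
    ⟨ht.2, MulAction.mem_stabilizer_set.mpr (mem_support_iff_of_commute (hgT t ht))⟩
  have hd₁ : swap a b * swap c d ∈ K :=
    ⟨swap_mul_swap_mem_alternatingGroup (by grind) (by grind),
      mul_mem (swap_mem_stabilizer ha hb) (swap_mem_stabilizer hc hd)⟩
  have hd₂ : swap a c * swap b d ∈ K :=
    ⟨swap_mul_swap_mem_alternatingGroup (by grind) (by grind),
      mul_mem (swap_mem_stabilizer ha hc) (swap_mem_stabilizer hb hd)⟩
  obtain ⟨κ, hκK, hκ⟩ := S.exists_conj_mem_inf_of_isPGroup hTK inf_le_left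
    (sup_le (zpowers_le.mpr hd₁) (zpowers_le.mpr hd₂))
    (IsPGroup.zpowers_sup_zpowers (commute_swap_mul_swap hnd)
      (isPGroup_zpowers_swap_mul_swap hnd) (isPGroup_zpowers_swap_mul_swap hnd₂))
  have h₁ := hκ _ (mem_sup_left (mem_zpowers _))
  have h₂ := hκ _ (mem_sup_right (mem_zpowers _))
  have h₃ := hκ _ (mul_mem (mem_sup_left (mem_zpowers _)) (mem_sup_right (mem_zpowers _)))
  rw [swap_mul_swap_mul_swap_mul_swap hnd] at h₃
  rw [conj_swap_mul_swap] at h₁ h₂ h₃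
  exact ⟨κ a, κ b, κ c, κ d, by simpa using hnd.map κ.injective,
    (MulAction.mem_stabilizer_set.mp hκK.2 a).mpr ha, h₁, h₂, h₃⟩

theorem card_support_lt_four_of_mem_fusionCent (hg : g ∈ fusionCent S (alternatingGroup α)) :
    #g.support < 4 := by
  by_contra! h4
  obtain ⟨a, b, c, d, hnd, ha, h₁, h₂, h₃⟩ :=
    exists_swap_mul_swap_mem_of_four_le_card_support (fun t ht ↦ commute_of_mem_fusionCent hg ht) h4
  have hga : g a = b ∨ g a = c ∨ g a = d := by
    have e := DFunLike.congr_fun (commute_of_mem_fusionCent hg h₁).eq a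
    rw [mem_support] at ha
    simp only [List.nodup_cons, List.mem_cons, List.not_mem_nil] at hnd
    simp only [Perm.mul_apply, swap_apply_def] at e
    grind [Equiv.apply_eq_iff_eq]
  rcases hga with h | h | h
  · exact notMem_fusionCent_of_apply_eq hnd h₁ h₂ h hg
  · exact notMem_fusionCent_of_apply_eq (by simp at hnd ⊢; grind) h₂ h₁ h hg
  · exact notMem_fusionCent_of_apply_eq (by simp at hnd ⊢; grind) h₃
      (by rwa [swap_comm d]) h hg

theorem eq_one_of_mem_fusionCent (hα : 6 ≤ Fintype.card α)
    (hg : g ∈ fusionCent S (alternatingGroup α)) : g = 1 := by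
  by_contra hne
  obtain ⟨k, hk⟩ := S.isPGroup' ⟨g, hg.1⟩
  have := dvd_card_support_of_pow_eq_one (p := 2) (k := k) (by simpa using congrArg Subtype.val hk)
  have := one_lt_card_support_of_ne_one hne
  have := card_support_ne_two_of_mem_fusionCent hα hg
  have := card_support_lt_four_of_mem_fusionCent hg
  omega

end SymmetricGroup

/-- For `G = S_n`, `H = A_n` (`n ≥ 6`), `p = 2` and `S` a Sylow `2`-subgroup of `G`,
one has `C_S(E) = C_G(H) ∩ S`; in particular `C_S(E)` is trivial. -/
theorem fusionCent_symm_alternating (n : ℕ) (hn : 6 ≤ n)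
    (S : Sylow 2 (Equiv.Perm (Fin n))) :
    fusionCent (S : Subgroup (Equiv.Perm (Fin n))) (alternatingGroup (Fin n)) =
        ((Subgroup.centralizer ((alternatingGroup (Fin n) : Subgroup (Equiv.Perm (Fin n))) :
            Set (Equiv.Perm (Fin n))) ⊓ (S : Subgroup (Equiv.Perm (Fin n)))) :
          Set (Equiv.Perm (Fin n))) ∧
      fusionCent (S : Subgroup (Equiv.Perm (Fin n))) (alternatingGroup (Fin n)) =
        {(1 : Equiv.Perm (Fin n))} := by
  have hone : fusionCent (S : Subgroup (Perm (Fin n))) (alternatingGroup (Fin n)) = {1} :=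
    Set.eq_singleton_iff_unique_mem.mpr ⟨centralizer_inf_subset_fusionCent (one_mem _),
      fun _ hg ↦ eq_one_of_mem_fusionCent (by simpa using hn) hg⟩
  refine ⟨subset_antisymm ?_ centralizer_inf_subset_fusionCent, hone⟩
  rw [hone]
  exact Set.singleton_subset_iff.mpr ⟨one_mem _, one_mem _⟩
end
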